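/- No extremal of the reduced system is v-singular: if (p,q,(u,v)) is an extremal of the reduced system on a nondegenerate interval [t0,t1], then the switching function φ_v(t) = −p_x(t) does not vanish identically on [t0,t1]. -/
import Mathlib


open MeasureTheory Set

noncomputable section

/-- An admissible pair of the reduced system on `[t0, t1]`: a measurable control
`(u, v)` with values in `[-1,1] × [ν,η]` together with a Lipschitz curve
`q = (x, y)` satisfying `x' = -v - u y`, `y' = u x` a.e. -/
def ReducedAdm (ν η t0 t1 : ℝ) (q : ℝ → ℝ × ℝ) (u v : ℝ → ℝ) : Prop :=
  Measurable u ∧ Measurable v ∧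
  (∀ᵐ t ∂volume, t ∈ Icc t0 t1 → u t ∈ Icc (-1 : ℝ) 1 ∧ v t ∈ Icc ν η) ∧
  (∃ K, LipschitzOnWith K q (Icc t0 t1)) ∧
  (∀ᵐ t ∂volume, t ∈ Icc t0 t1 →
    HasDerivWithinAt q (-(v t) - u t * (q t).2, u t * (q t).1) (Icc t0 t1) t)

/-- The switching function `φ_u(t) = p_y(t) x(t) - p_x(t) y(t)` of the reduced system. -/
def phiU (p q : ℝ → ℝ × ℝ) (t : ℝ) : ℝ := (p t).2 * (q t).1 - (p t).1 * (q t).2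

/-- The switching function `φ_v(t) = -p_x(t)` of the reduced system. -/
def phiV (p : ℝ → ℝ × ℝ) (t : ℝ) : ℝ := -(p t).1

/-- An extremal of the reduced system on `[t0, t1]` with multiplier `lam ≥ 0`: an
admissible pair together with a Lipschitz never vanishing covector `p = (p_x, p_y)`
satisfying the adjoint equation `p_x' = -u p_y`, `p_y' = u p_x` a.e., the maximality
condition a.e., and constancy of the Hamiltonian `v φ_v + u φ_u = lam` a.e. -/
def ReducedExtremal (ν η t0 t1 : ℝ) (p q : ℝ → ℝ × ℝ) (u v : ℝ → ℝ) (lam : ℝ) : Prop :=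
  ReducedAdm ν η t0 t1 q u v ∧
  (∃ K, LipschitzOnWith K p (Icc t0 t1)) ∧
  (∀ t ∈ Icc t0 t1, p t ≠ 0) ∧
  (∀ᵐ t ∂volume, t ∈ Icc t0 t1 →
    HasDerivWithinAt p (-(u t) * (p t).2, u t * (p t).1) (Icc t0 t1) t) ∧
  0 ≤ lam ∧
  (∀ᵐ t ∂volume, t ∈ Icc t0 t1 →
    (∀ w ∈ Icc (-1 : ℝ) 1, ∀ z ∈ Icc ν η,
      z * phiV p t + w * phiU p q t ≤ v t * phiV p t + u t * phiU p q t) ∧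
    v t * phiV p t + u t * phiU p q t = lam)


private lemma hasDerivWithinAt_fst_comp' {p : ℝ → ℝ × ℝ} {d : ℝ × ℝ} {s : Set ℝ} {t : ℝ}
    (h : HasDerivWithinAt p d s t) :
    HasDerivWithinAt (fun r => (p r).1) d.1 s t := by
  have h2 := h.hasFDerivWithinAt.fst
  simpa using h2.hasDerivWithinAt

private lemma contOn_eq_zero' {a b : ℝ} (hab : a < b) {f : ℝ → ℝ}
    (hf : ContinuousOn f (Icc a b))
    (h : ∀ᵐ t ∂(volume.restrict (Icc a b)), f t = 0) :
    ∀ t ∈ Icc a b, f t = 0 := by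
  intro t htm
  by_contra hft
  have hc : 0 < |f t| := abs_pos.mpr hft
  have hev : ∀ᶠ s in nhdsWithin t (Icc a b), |f s - f t| < |f t| :=
    hf t htm (by
      have : Metric.ball (f t) (|f t|) ∈ nhds (f t) := Metric.ball_mem_nhds _ hc
      simpa [Metric.mem_ball, Real.dist_eq] using this)
  rw [Filter.eventually_iff, Metric.mem_nhdsWithin_iff] at hev
  obtain ⟨ε, hε, hball⟩ := hev
  have hI : max a (t - ε) < min b (t + ε) := by
    apply max_lt <;> apply lt_min
    · exact hab
    · linarith [htm.1]
    · linarith [htm.2]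
    · linarith
  have hsub : Ioo (max a (t - ε)) (min b (t + ε)) ⊆ {s | ¬ f s = 0} ∩ Icc a b := by
    intro s hs
    have hsIcc : s ∈ Icc a b :=
      ⟨le_of_lt (lt_of_le_of_lt (le_max_left _ _) hs.1),
       le_of_lt (lt_of_lt_of_le hs.2 (min_le_left _ _))⟩
    have hsball : s ∈ Metric.ball t ε := by
      rw [Metric.mem_ball, Real.dist_eq, abs_lt]
      have h1 := lt_of_le_of_lt (le_max_right _ _) hs.1
      have h2 := lt_of_lt_of_le hs.2 (min_le_right _ _)
      constructor <;> linarith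
    refine ⟨fun h0 => ?_, hsIcc⟩
    have := hball ⟨hsball, hsIcc⟩
    rw [Set.mem_setOf_eq, h0, zero_sub, abs_neg] at this
    exact lt_irrefl _ this
  have hnull : volume ({s | ¬ f s = 0} ∩ Icc a b) = 0 := by
    have := ae_iff.mp h
    rwa [Measure.restrict_apply' measurableSet_Icc] at this
  have hpos : (0 : ENNReal) < volume (Ioo (max a (t - ε)) (min b (t + ε))) := by
    rw [Real.volume_Ioo]; simp [hI]
  have hle : volume (Ioo (max a (t - ε)) (min b (t + ε)))
      ≤ volume ({s | ¬ f s = 0} ∩ Icc a b) := measure_mono hsub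
  rw [hnull] at hle
  exact hpos.not_ge hle

/-- No extremal of the reduced system is `v`-singular: the switching function
`φ_v = -p_x` cannot vanish identically on a nondegenerate interval. -/
theorem reduced_no_v_singular (ν η : ℝ) (hν : 0 < ν) (hνη : ν ≤ η)
    (t0 t1 : ℝ) (ht : t0 < t1)
    (p q : ℝ → ℝ × ℝ) (u v : ℝ → ℝ) (lam : ℝ)
    (hext : ReducedExtremal ν η t0 t1 p q u v lam) :
    ¬ ∀ t ∈ Icc t0 t1, phiV p t = 0 := by
  intro h
  obtain ⟨⟨hu_m, hv_m, h_bd, ⟨Kq, hq_lip⟩, h_dyn⟩, ⟨Kp, hp_lip⟩, hp_ne, h_adj, hlam, h_max⟩ := hext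
  have hpx : ∀ s ∈ Icc t0 t1, (p s).1 = 0 := by
    intro s hs
    have := h s hs
    simpa [phiV, neg_eq_zero] using this
  have hpy : ∀ s ∈ Icc t0 t1, (p s).2 ≠ 0 := by
    intro s hs h0
    exact hp_ne s hs (Prod.ext (hpx s hs) h0)
  have hUD : UniqueDiffOn ℝ (Icc t0 t1) := uniqueDiffOn_Icc ht
  have hNZ : volume.restrict (Icc t0 t1) ≠ 0 := by
    simp only [Ne, Measure.restrict_eq_zero, Real.volume_Icc, ENNReal.ofReal_eq_zero, not_le]
    linarith
  haveI : (ae (volume.restrict (Icc t0 t1))).NeBot := ae_neBot.mpr hNZ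
  have hR : ∀ {P : ℝ → Prop}, (∀ᵐ t ∂volume, t ∈ Icc t0 t1 → P t) →
      ∀ᵐ t ∂(volume.restrict (Icc t0 t1)), P t := fun h' =>
    (ae_restrict_iff' measurableSet_Icc).mpr h'
  have hmem : ∀ᵐ t ∂(volume.restrict (Icc t0 t1)), t ∈ Icc t0 t1 :=
    ae_restrict_mem measurableSet_Icc
  -- Step 1: u = 0 a.e. on [t0,t1]
  have hu0 : ∀ᵐ t ∂(volume.restrict (Icc t0 t1)), u t = 0 := by
    filter_upwards [hR h_adj, hmem] with t hadj htm
    have h1 : HasDerivWithinAt (fun s => (p s).1) (-(u t) * (p t).2) (Icc t0 t1) t :=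
      hasDerivWithinAt_fst_comp' hadj
    have h2 : HasDerivWithinAt (fun s => (p s).1) 0 (Icc t0 t1) t :=
      (hasDerivWithinAt_const t (Icc t0 t1) (0 : ℝ)).congr (fun s hs => hpx s hs) (hpx t htm)
    have e : -(u t) * (p t).2 = 0 :=
      (h1.derivWithin (hUD t htm)).symm.trans (h2.derivWithin (hUD t htm))
    rcases mul_eq_zero.mp e with h' | h'
    · simpa using h'
    · exact absurd h' (hpy t htm)
  -- Step 2: lam = 0
  have hlam0 : lam = 0 := by
    obtain ⟨t, htm, hmax, hu⟩ := (hmem.and ((hR h_max).and hu0)).exists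
    have hH := hmax.2
    rw [h t htm, hu] at hH
    simpa using hH.symm
  -- Step 3: x = 0 a.e. on [t0,t1]
  have hx0ae : ∀ᵐ t ∂(volume.restrict (Icc t0 t1)), (q t).1 = 0 := by
    filter_upwards [hmem, hR h_max, hu0] with t htm hmax hu
    have h1 := hmax.1 1 (by norm_num) ν ⟨le_refl ν, hνη⟩
    have h2 := hmax.1 (-1) (by norm_num) ν ⟨le_refl ν, hνη⟩
    have hH := hmax.2
    rw [h t htm, hu] at h1 h2
    rw [h t htm, hu, hlam0] at hH
    have hphiU : phiU p q t = 0 := by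
      simp only [mul_zero, zero_mul, add_zero, zero_add, one_mul, neg_one_mul, neg_mul] at h1 h2 hH
      linarith
    unfold phiU at hphiU
    rw [hpx t htm] at hphiU
    simp only [zero_mul, sub_zero] at hphiU
    rcases mul_eq_zero.mp hphiU with h' | h'
    · exact absurd h' (hpy t htm)
    · exact h'
  -- Step 4: x = 0 everywhere on [t0,t1] by continuity
  have hq_cont : ContinuousOn (fun s => (q s).1) (Icc t0 t1) :=
    continuous_fst.comp_continuousOn hq_lip.continuousOn
  have hx0 : ∀ s ∈ Icc t0 t1, (q s).1 = 0 := contOn_eq_zero' ht hq_cont hx0ae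
  -- Step 5: final contradiction via the dynamics of x
  obtain ⟨t, htm, hdyn, hbd, hu⟩ := (hmem.and ((hR h_dyn).and ((hR h_bd).and hu0))).exists
  have h1 : HasDerivWithinAt (fun s => (q s).1) (-(v t) - u t * (q t).2) (Icc t0 t1) t :=
    hasDerivWithinAt_fst_comp' hdyn
  have h2 : HasDerivWithinAt (fun s => (q s).1) 0 (Icc t0 t1) t :=
    (hasDerivWithinAt_const t (Icc t0 t1) (0 : ℝ)).congr (fun s hs => hx0 s hs) (hx0 t htm)
  have e : -(v t) - u t * (q t).2 = 0 :=
    (h1.derivWithin (hUD t htm)).symm.trans (h2.derivWithin (hUD t htm))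
  rw [hu] at e
  have hvν : ν ≤ v t := (hbd.2).1
  have : v t = 0 := by linarith
  linarith
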